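/- Joint repetition unfolding (soundness of the derived axiom ⟨*]): For every hybrid game α and all sets of states X, Y ⊆ S, the joint semi-competitive winning region of the repetition game satisfies ς_{α*}(X, Y) ∩ δ_{α*}(X, Y) = (X ∩ Y) ∪ (ς_{α ; α*}(X, Y) ∩ δ_{α ; α*}(X, Y)). -/
import Mathlib


open Set

/-- Hybrid games over a variable set `V`. Terms/ODE right-hand sides are
interpreted as functions from states `V → ℝ` to `ℝ`; tests and evolution
domain constraints are sets of states. -/
inductive Game (V : Type*) where
  | assign (x : V) (e : (V → ℝ) → ℝ)
  | ode (x : V) (f : (V → ℝ) → ℝ) (Q : Set (V → ℝ))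
  | test (Q : Set (V → ℝ))
  | choice (a b : Game V)
  | seq (a b : Game V)
  | dual (a : Game V)
  | star (a : Game V)

variable {V : Type*} [DecidableEq V]

/-- `φ : ℝ → (V → ℝ)` (restricted to `[0,r]`) is a solution of `x' = f(x) & Q`
of duration `r ≥ 0`: `t ↦ φ t x` is differentiable with derivative `f (φ s)`
at each `s ∈ [0,r]`, `φ s ∈ Q` on `[0,r]`, and all other variables stay
constant along `φ`. -/
def IsSolution (x : V) (f : (V → ℝ) → ℝ) (Q : Set (V → ℝ)) (r : ℝ)
    (φ : ℝ → (V → ℝ)) : Prop :=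
  0 ≤ r ∧
  (∀ s ∈ Set.Icc 0 r, HasDerivAt (fun t => φ t x) (f (φ s)) s) ∧
  (∀ s ∈ Set.Icc 0 r, φ s ∈ Q) ∧
  (∀ s ∈ Set.Icc 0 r, ∀ y, y ≠ x → φ s y = φ 0 y)

mutual
/-- Angel's semi-competitive winning region ς_α(X,Y). -/
def angel : Game V → Set (V → ℝ) → Set (V → ℝ) → Set (V → ℝ)
  | .assign x e, X, _ => {ω | Function.update ω x (e ω) ∈ X}
  | .ode x f Q, X, _ =>
      {ω | ∃ r φ, IsSolution x f Q r φ ∧ φ 0 = ω ∧ φ r ∈ X}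
  | .test Q, X, _ => Q ∩ X
  | .choice a b, X, Y => angel a X Y ∪ angel b X Y
  | .seq a b, X, Y => angel a (angel b X Y) (demon b X Y)
  | .dual a, X, Y => demon a Y X
  | .star a, X, Y =>
      ⋂₀ {Z | X ∪ angel a Z Zᶜ ⊆ Z} ∪
      ⋂₀ {Z | (X ∩ Y) ∪ (angel a Z Z ∩ demon a Z Z) ⊆ Z}

/-- Demon's semi-competitive winning region δ_α(X,Y). -/
def demon : Game V → Set (V → ℝ) → Set (V → ℝ) → Set (V → ℝ)
  | .assign x e, _, Y => {ω | Function.update ω x (e ω) ∈ Y}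
  | .ode x f Q, X, Y =>
      {ω | ∀ r φ, IsSolution x f Q r φ → φ 0 = ω → ∀ s ∈ Set.Icc 0 r, φ s ∈ Y} ∪
      {ω | ∃ r φ, IsSolution x f Q r φ ∧ φ 0 = ω ∧ ∃ s ∈ Set.Icc 0 r, φ s ∈ X ∩ Y}
  | .test Q, _, Y => Qᶜ ∪ Y
  | .choice a b, X, Y =>
      (demon a X Y ∩ demon b X Y) ∪ (demon a X Y ∩ angel a X Y) ∪
      (demon b X Y ∩ angel b X Y)
  | .seq a b, X, Y => demon a (angel b X Y) (demon b X Y)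
  | .dual a, X, Y => angel a Y X
  | .star a, X, Y =>
      ⋃₀ {Z | Z ⊆ Y ∩ demon a Zᶜ Z} ∪
      ⋂₀ {Z | (X ∩ Y) ∪ (angel a Z Z ∩ demon a Z Z) ⊆ Z}
end

/-- Angel's one-argument zero-sum dGL winning region ς_α(X). -/
def dglAngel : Game V → Set (V → ℝ) → Set (V → ℝ)
  | .assign x e, X => {ω | Function.update ω x (e ω) ∈ X}
  | .ode x f Q, X => {ω | ∃ r φ, IsSolution x f Q r φ ∧ φ 0 = ω ∧ φ r ∈ X}
  | .test Q, X => Q ∩ X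
  | .choice a b, X => dglAngel a X ∪ dglAngel b X
  | .seq a b, X => dglAngel a (dglAngel b X)
  | .dual a, X => (dglAngel a Xᶜ)ᶜ
  | .star a, X => ⋂₀ {Z | X ∪ dglAngel a Z ⊆ Z}

/-- Demon's one-argument zero-sum dGL winning region δ_α(X) = (ς_α(Xᶜ))ᶜ. -/
def dglDemon (g : Game V) (X : Set (V → ℝ)) : Set (V → ℝ) :=
  (dglAngel g Xᶜ)ᶜ

/-- Systematization α^{-d}: removes all dual operators. -/
def Game.sys : Game V → Game V
  | .assign x e => .assign x e
  | .ode x f Q => .ode x f Q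
  | .test Q => .test Q
  | .choice a b => .choice a.sys b.sys
  | .seq a b => .seq a.sys b.sys
  | .dual a => a.sys
  | .star a => .star a.sys

/-! ### Auxiliary lemmas -/

lemma isSolution_restrict {x : V} {f : (V → ℝ) → ℝ} {Q : Set (V → ℝ)} {r : ℝ}
    {φ : ℝ → (V → ℝ)} (h : IsSolution x f Q r φ) {s : ℝ} (hs : s ∈ Set.Icc 0 r) :
    IsSolution x f Q s φ := by
  obtain ⟨hr, hd, hQ, hc⟩ := h
  have hsub : Set.Icc (0:ℝ) s ⊆ Set.Icc 0 r :=
    Set.Icc_subset_Icc le_rfl hs.2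
  exact ⟨hs.1, fun t ht => hd t (hsub ht), fun t ht => hQ t (hsub ht),
    fun t ht => hc t (hsub ht)⟩

/-- Monotonicity of both winning regions in both arguments. -/
theorem angel_demon_mono (α : Game V) :
    ∀ ⦃X X' Y Y' : Set (V → ℝ)⦄, X ⊆ X' → Y ⊆ Y' →
      angel α X Y ⊆ angel α X' Y' ∧ demon α X Y ⊆ demon α X' Y' := by
  induction α with
  | assign x e =>
    intro X X' Y Y' hX hY
    exact ⟨fun ω h => hX h, fun ω h => hY h⟩
  | ode x f Q =>
    intro X X' Y Y' hX hY
    constructor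
    · rintro ω ⟨r, φ, hs, h0, hr⟩
      exact ⟨r, φ, hs, h0, hX hr⟩
    · rintro ω (h | ⟨r, φ, hs, h0, s, hsI, hm⟩)
      · exact Or.inl fun r φ hsol h0 s hsI => hY (h r φ hsol h0 s hsI)
      · exact Or.inr ⟨r, φ, hs, h0, s, hsI, hX hm.1, hY hm.2⟩
  | test Q =>
    intro X X' Y Y' hX hY
    constructor
    · exact fun ω h => ⟨h.1, hX h.2⟩
    · rintro ω (h | h)
      · exact Or.inl h
      · exact Or.inr (hY h)
  | choice a b iha ihb =>
    intro X X' Y Y' hX hY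
    obtain ⟨ha1, ha2⟩ := iha hX hY
    obtain ⟨hb1, hb2⟩ := ihb hX hY
    constructor
    · exact Set.union_subset_union ha1 hb1
    · exact Set.union_subset_union (Set.union_subset_union
        (Set.inter_subset_inter ha2 hb2) (Set.inter_subset_inter ha2 ha1))
        (Set.inter_subset_inter hb2 hb1)
  | seq a b iha ihb =>
    intro X X' Y Y' hX hY
    obtain ⟨hb1, hb2⟩ := ihb hX hY
    exact iha hb1 hb2
  | dual a iha =>
    intro X X' Y Y' hX hY
    exact ⟨(iha hY hX).2, (iha hY hX).1⟩
  | star a iha =>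
    intro X X' Y Y' hX hY
    have hXY : X ∩ Y ⊆ X' ∩ Y' := Set.inter_subset_inter hX hY
    constructor
    · apply Set.union_subset_union
      · intro ω hω
        intro Z hZ
        exact hω Z (Set.Subset.trans (Set.union_subset_union hX Set.Subset.rfl) hZ)
      · intro ω hω
        intro Z hZ
        exact hω Z (Set.Subset.trans (Set.union_subset_union hXY Set.Subset.rfl) hZ)
    · apply Set.union_subset_union
      · rintro ω ⟨Z, hZ, hω⟩
        exact ⟨Z, Set.Subset.trans hZ (Set.inter_subset_inter hY Set.Subset.rfl), hω⟩
      · intro ω hω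
        intro Z hZ
        exact hω Z (Set.Subset.trans (Set.union_subset_union hXY Set.Subset.rfl) hZ)

/-- The joint least-fixpoint region appearing in the `star` semantics. -/
def Kstar (a : Game V) (W : Set (V → ℝ)) : Set (V → ℝ) :=
  ⋂₀ {Z | W ∪ (angel a Z Z ∩ demon a Z Z) ⊆ Z}

lemma Kstar_prefix (a : Game V) (W : Set (V → ℝ)) :
    W ∪ (angel a (Kstar a W) (Kstar a W) ∩ demon a (Kstar a W) (Kstar a W)) ⊆
      Kstar a W := by
  intro ω hω Z hZ
  have hKZ : Kstar a W ⊆ Z := Set.sInter_subset_of_mem hZ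
  rcases hω with hω | hω
  · exact hZ (Or.inl hω)
  · exact hZ (Or.inr ⟨((angel_demon_mono a hKZ hKZ).1 hω.1),
      ((angel_demon_mono a hKZ hKZ).2 hω.2)⟩)

lemma Kstar_fix (a : Game V) (W : Set (V → ℝ)) :
    Kstar a W =
      W ∪ (angel a (Kstar a W) (Kstar a W) ∩ demon a (Kstar a W) (Kstar a W)) := by
  apply Set.Subset.antisymm _ (Kstar_prefix a W)
  apply Set.sInter_subset_of_mem
  show W ∪ _ ⊆ _
  apply Set.union_subset (Set.subset_union_left)
  intro ω hω
  refine Or.inr ?_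
  have hFK : W ∪ (angel a (Kstar a W) (Kstar a W) ∩ demon a (Kstar a W) (Kstar a W))
      ⊆ Kstar a W := Kstar_prefix a W
  exact ⟨(angel_demon_mono a hFK hFK).1 hω.1, (angel_demon_mono a hFK hFK).2 hω.2⟩

/-- If Angel can win to `X` regardless and Demon can maintain `Y` regardless,
then they can jointly win to `X ∩ Y`. -/
lemma astar_inter_dstar (a : Game V)
    (hdiag : ∀ X Y : Set (V → ℝ), angel a X Y ∩ demon a X Y =
      angel a (X ∩ Y) (X ∩ Y) ∩ demon a (X ∩ Y) (X ∩ Y))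
    (X Y : Set (V → ℝ)) :
    (⋂₀ {Z | X ∪ angel a Z Zᶜ ⊆ Z}) ∩ (⋃₀ {Z | Z ⊆ Y ∩ demon a Zᶜ Z}) ⊆
      Kstar a (X ∩ Y) := by
  rintro ω ⟨hA, Z, hZ, hωZ⟩
  set K := Kstar a (X ∩ Y) with hK
  have hZY : Z ⊆ Y := fun τ hτ => (hZ hτ).1
  have hZd : ∀ τ ∈ Z, τ ∈ demon a Zᶜ Z := fun τ hτ => (hZ hτ).2
  have hP : (Zᶜ ∪ K) ∩ (Z ∪ K) = K := by
    ext τ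
    simp only [Set.mem_inter_iff, Set.mem_union, Set.mem_compl_iff]
    tauto
  have hpre : X ∪ angel a (Zᶜ ∪ K) (Zᶜ ∪ K)ᶜ ⊆ Zᶜ ∪ K := by
    rintro τ (hτ | hτ)
    · by_cases hτZ : τ ∈ Z
      · exact Or.inr (Kstar_prefix a (X ∩ Y) (Or.inl ⟨hτ, hZY hτZ⟩))
      · exact Or.inl hτZ
    · by_cases hτZ : τ ∈ Z
      · refine Or.inr ?_
        have h1 : τ ∈ angel a (Zᶜ ∪ K) (Z ∪ K) := by
          refine (angel_demon_mono a Set.Subset.rfl ?_).1 hτ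
          rw [Set.compl_union, compl_compl]
          exact Set.Subset.trans Set.inter_subset_left Set.subset_union_left
        have h2 : τ ∈ demon a (Zᶜ ∪ K) (Z ∪ K) :=
          (angel_demon_mono a Set.subset_union_left Set.subset_union_left).2
            (hZd τ hτZ)
        have h3 : τ ∈ angel a K K ∩ demon a K K := by
          have := hdiag (Zᶜ ∪ K) (Z ∪ K)
          rw [hP] at this
          rw [← this]
          exact ⟨h1, h2⟩
        exact Kstar_prefix a (X ∩ Y) (Or.inr h3)
      · exact Or.inl hτZ
  have := hA (Zᶜ ∪ K) hpre
  rcases this with h | h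
  · exact absurd hωZ h
  · exact h

/-- The joint winning region of a star game is exactly the joint fixpoint. -/
lemma joint_star (a : Game V)
    (hdiag : ∀ X Y : Set (V → ℝ), angel a X Y ∩ demon a X Y =
      angel a (X ∩ Y) (X ∩ Y) ∩ demon a (X ∩ Y) (X ∩ Y))
    (X Y : Set (V → ℝ)) :
    angel (.star a) X Y ∩ demon (.star a) X Y = Kstar a (X ∩ Y) := by
  have hunf1 : angel (Game.star a) X Y =
      (⋂₀ {Z | X ∪ angel a Z Zᶜ ⊆ Z}) ∪ Kstar a (X ∩ Y) := by
    simp only [angel, Kstar]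
  have hunf2 : demon (Game.star a) X Y =
      (⋃₀ {Z | Z ⊆ Y ∩ demon a Zᶜ Z}) ∪ Kstar a (X ∩ Y) := by
    simp only [demon, Kstar]
  rw [hunf1, hunf2]
  apply Set.Subset.antisymm
  · rintro ω ⟨h1 | h1, h2 | h2⟩
    · exact astar_inter_dstar a hdiag X Y ⟨h1, h2⟩
    · exact h2
    · exact h1
    · exact h1
  · exact Set.subset_inter Set.subset_union_right Set.subset_union_right

/-- The diagonal lemma: the joint semi-competitive winning region only depends
on the intersection of the goals. -/
theorem joint_diag (α : Game V) (X Y : Set (V → ℝ)) :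
    angel α X Y ∩ demon α X Y =
      angel α (X ∩ Y) (X ∩ Y) ∩ demon α (X ∩ Y) (X ∩ Y) := by
  induction α generalizing X Y with
  | assign x e =>
    simp only [angel, demon]
    ext ω
    simp only [Set.mem_inter_iff, Set.mem_setOf_eq]
    tauto
  | ode x f Q =>
    simp only [angel, demon]
    ext ω
    simp only [Set.mem_inter_iff, Set.mem_setOf_eq, Set.mem_union]
    constructor
    · rintro ⟨⟨r, φ, hsol, h0, hX⟩, hd⟩
      rcases hd with hall | ⟨r', φ', hsol', h0', s, hsI, hXY⟩
      · have hY : φ r ∈ Y := hall r φ hsol h0 r ⟨hsol.1, le_rfl⟩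
        refine ⟨⟨r, φ, hsol, h0, hX, hY⟩, Or.inr ⟨r, φ, hsol, h0, r,
          ⟨hsol.1, le_rfl⟩, ⟨hX, hY⟩, hX, hY⟩⟩
      · have hsol'' := isSolution_restrict hsol' hsI
        refine ⟨⟨s, φ', hsol'', h0', hXY⟩, Or.inr ⟨s, φ', hsol'', h0', s,
          ⟨hsI.1, le_rfl⟩, hXY, hXY⟩⟩
    · rintro ⟨⟨r, φ, hsol, h0, hXY⟩, _⟩
      exact ⟨⟨r, φ, hsol, h0, hXY.1⟩, Or.inr ⟨r, φ, hsol, h0, r,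
        ⟨hsol.1, le_rfl⟩, hXY⟩⟩
  | test Q =>
    simp only [angel, demon]
    ext ω
    simp only [Set.mem_inter_iff, Set.mem_union, Set.mem_compl_iff,
      Set.mem_inter_iff]
    tauto
  | choice a b iha ihb =>
    have key : ∀ P P' Q Q' : Set (V → ℝ),
        (P ∪ P') ∩ ((Q ∩ Q') ∪ (Q ∩ P) ∪ (Q' ∩ P')) = (P ∩ Q) ∪ (P' ∩ Q') := by
      intro P P' Q Q'
      ext τ
      simp only [Set.mem_inter_iff, Set.mem_union]
      tauto
    simp only [angel, demon]
    rw [key, key, iha, ihb]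
  | seq a b iha ihb =>
    simp only [angel, demon]
    rw [iha (angel b X Y) (demon b X Y), ihb X Y,
      iha (angel b (X ∩ Y) (X ∩ Y)) (demon b (X ∩ Y) (X ∩ Y))]
  | dual a iha =>
    simp only [angel, demon]
    rw [Set.inter_comm (demon a Y X), Set.inter_comm (demon a (X ∩ Y) (X ∩ Y)),
      iha Y X, iha (X ∩ Y) (X ∩ Y), Set.inter_comm Y X, Set.inter_self (X ∩ Y)]
  | star a iha =>
    rw [joint_star a iha X Y, joint_star a iha (X ∩ Y) (X ∩ Y),
      Set.inter_self (X ∩ Y)]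

/-- Joint repetition unfolding, soundness of the derived axiom ⟨*]:
`ς_{α*}(X, Y) ∩ δ_{α*}(X, Y) = (X ∩ Y) ∪ (ς_{α;α*}(X, Y) ∩ δ_{α;α*}(X, Y))`. -/
theorem joint_repetition_unfold (α : Game V) (X Y : Set (V → ℝ)) :
    angel (.star α) X Y ∩ demon (.star α) X Y =
      (X ∩ Y) ∪ (angel (.seq α (.star α)) X Y ∩ demon (.seq α (.star α)) X Y) := by
  have hd := joint_diag α
  have hjs := joint_star α hd X Y
  have hseq : angel (Game.seq α (Game.star α)) X Y ∩ demon (Game.seq α (Game.star α)) X Y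
      = angel α (Kstar α (X ∩ Y)) (Kstar α (X ∩ Y)) ∩
        demon α (Kstar α (X ∩ Y)) (Kstar α (X ∩ Y)) := by
    have e1 : angel (Game.seq α (Game.star α)) X Y =
        angel α (angel (Game.star α) X Y) (demon (Game.star α) X Y) := by
      conv_lhs => rw [angel]
    have e2 : demon (Game.seq α (Game.star α)) X Y =
        demon α (angel (Game.star α) X Y) (demon (Game.star α) X Y) := by
      conv_lhs => rw [demon]
    rw [e1, e2, hd (angel (Game.star α) X Y) (demon (Game.star α) X Y), hjs]
  rw [hjs, hseq]
  exact Kstar_fix α (X ∩ Y)
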